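/- arXiv:1303.3600 — 9 statements merged into one kernel-verified Lean document; each statement's English description precedes it below -/
import Mathlib

section
/- For each natural number k ≥ 2, consider the commutative semigroup S = {0,1,...,k-1} ∪ (kℕ+1) with addition modulo k, colored by assigning to each a in S the color a mod k. Then for any sequence of distinct elements a_1, a_2, ... of S, the set of finite sums of distinct elements of the sequence attains all k colors. -/
/-- The iterated sum `a₁ + a₂ + ⋯ + a_m` in the semigroup
`S = {0,…,k-1} ∪ (kℕ+1)` whose operation is `(a, b) ↦ (a + b) % k`:
a singleton list evaluates to its unique entry, and longer lists are
evaluated by folding the operation. -/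
def modSum (k : ℕ) : List ℕ → ℕ
  | [] => 0
  | [a] => a
  | a :: l => (a + modSum k l) % k

/-!
An injective sequence in `S` meets the finite part `{0, …, k-1}` only finitely often, so
infinitely many of its terms are `≡ 1 (mod k)`. The sum of any `m` of those is `≡ m`, and
taking `m = c + k` of them (distinct indices, listed increasingly) gives colour `c`; the
extra `k` keeps the list nonempty when `c = 0`.
-/

lemma modSum_mod (k : ℕ) : ∀ l : List ℕ, l ≠ [] → modSum k l % k = l.sum % k
  | [a], _ => by simp [modSum]
  | a :: b :: l, _ => by
      have ih := modSum_mod k (b :: l) (List.cons_ne_nil b l)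
      show (a + modSum k (b :: l)) % k % k = (a + (b :: l).sum) % k
      rw [Nat.mod_mod, Nat.add_mod, ih, ← Nat.add_mod]

lemma List.sum_mod_eq_length_mod_of_forall_mod_eq_one {k : ℕ} (l : List ℕ)
    (h : ∀ x ∈ l, x % k = 1) : l.sum % k = l.length % k := by
  induction l with
  | nil => rfl
  | cons a l ih =>
    rw [List.sum_cons, List.length_cons, Nat.add_mod, h a List.mem_cons_self,
      ih fun x hx => h x (List.mem_cons_of_mem a hx), Nat.add_comm, Nat.mod_add_mod]

lemma infinite_setOf_of_injective_of_lt_or {k : ℕ} {p : ℕ → Prop} {a : ℕ → ℕ}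
    (hinj : Function.Injective a) (ha : ∀ n, a n < k ∨ p (a n)) :
    {n | p (a n)}.Infinite := by
  have hsmall : (a ⁻¹' Set.Iio k).Finite := (Set.finite_Iio k).preimage hinj.injOn
  exact hsmall.infinite_compl.mono fun n hn => (ha n).resolve_left hn

lemma Set.Infinite.exists_pairwise_lt_list {s : Set ℕ} (hs : s.Infinite) (m : ℕ) :
    ∃ l : List ℕ, l.length = m ∧ l.Pairwise (· < ·) ∧ ∀ x ∈ l, x ∈ s := by
  refine ⟨(List.range m).map (Nat.nth (· ∈ s)), by simp, ?_, ?_⟩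
  · exact List.pairwise_lt_range.map _ fun _ _ => (Nat.nth_lt_nth hs).mpr
  · simp only [List.mem_map]
    rintro _ ⟨i, -, rfl⟩
    exact Nat.nth_mem_of_infinite hs i

theorem all_colors_attained_general (k : ℕ) (a : ℕ → ℕ)
    (ha : ∀ n, a n ∈ {m : ℕ | m < k ∨ m % k = 1})
    (hinj : Function.Injective a) :
    ∀ c < k, ∃ l : List ℕ, l ≠ [] ∧ l.Pairwise (· < ·) ∧
      modSum k (l.map a) % k = c := by
  intro c hc
  have hones : {n | a n % k = 1}.Infinite :=
    infinite_setOf_of_injective_of_lt_or (p := (· % k = 1)) hinj ha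
  obtain ⟨l, hlen, hsorted, hmem⟩ := hones.exists_pairwise_lt_list (c + k)
  have hne : l ≠ [] := List.ne_nil_of_length_pos (by omega)
  refine ⟨l, hne, hsorted, ?_⟩
  have hmod : ∀ x ∈ l.map a, x % k = 1 := by
    simp only [List.mem_map]
    rintro _ ⟨n, hn, rfl⟩
    exact hmem n hn
  rw [modSum_mod k _ (List.map_eq_nil_iff.not.mpr hne),
    List.sum_mod_eq_length_mod_of_forall_mod_eq_one _ hmod, List.length_map, hlen,
    Nat.add_mod_right, Nat.mod_eq_of_lt hc]

/-- Example: in the commutative semigroup `S = {0,1,…,k-1} ∪ (kℕ+1)` with addition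
modulo `k` (`k ≥ 2`), colored by `a ↦ a % k`, every sequence of distinct elements of
`S` has finite sums of distinct elements attaining all `k` colors. -/
theorem all_colors_attained (k : ℕ) (hk : 2 ≤ k) (a : ℕ → ℕ)
    (ha : ∀ n, a n ∈ {m : ℕ | m < k ∨ m % k = 1})
    (hinj : Function.Injective a) :
    ∀ c < k, ∃ l : List ℕ, l ≠ [] ∧ l.Pairwise (· < ·) ∧
      modSum k (l.map a) % k = c :=
  all_colors_attained_general k a ha hinj
end

section
/- For each finite coloring of the direct sum ⊕_n ℤ/2 (the countable direct sum of copies of ℤ/2ℤ), there is an infinite subgroup H such that H \ {0} is monochromatic. -/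
/-!
Apply Hindman's theorem to the finite sums of the unit vectors `eₙ`: this gives a sequence `b`
whose finite sums all have one colour and are all nonzero. As every element is its own inverse,
the subgroup generated by `b` consists of `0` and the finite sums of `b`. It is infinite because
`b` is injective: `bᵢ = bⱼ` with `i < j` would make the finite sum `bᵢ + bⱼ` zero.
-/

open Hindman Finset

namespace ZModModule

variable {G : Type*} [AddCommGroup G] [Module (ZMod 2) G]

theorem sum_add_sum_eq_sum_symmDiff {ι : Type*} [DecidableEq ι] (f : ι → G) (s t : Finset ι) :
    ∑ i ∈ s, f i + ∑ i ∈ t, f i = ∑ i ∈ symmDiff s t, f i := by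
  rw [symmDiff_def, sup_eq_union, sum_union disjoint_sdiff_sdiff, ← sum_inter_add_sum_sdiff s t,
    ← sum_inter_add_sum_sdiff t s, inter_comm t s, add_comm (∑ i ∈ s ∩ t, f i),
    add_add_add_cancel]

theorem exists_sum_eq_of_mem_closure_range {ι : Type*} {f : ι → G} {x : G}
    (hx : x ∈ AddSubgroup.closure (Set.range f)) : ∃ s : Finset ι, ∑ i ∈ s, f i = x := by
  classical
  induction hx using AddSubgroup.closure_induction with
  | mem _ hy => obtain ⟨i, rfl⟩ := hy; exact ⟨{i}, sum_singleton f i⟩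
  | zero => exact ⟨∅, sum_empty⟩
  | add _ _ _ _ hy hz =>
    obtain ⟨s, rfl⟩ := hy
    obtain ⟨t, rfl⟩ := hz
    exact ⟨symmDiff s t, (sum_add_sum_eq_sum_symmDiff f s t).symm⟩
  | neg _ _ hy =>
    obtain ⟨s, rfl⟩ := hy
    exact ⟨s, (neg_eq_self _).symm⟩

end ZModModule

namespace Hindman

theorem mem_FS_iff {M : Type*} [AddCommMonoid M] {a : Stream' M} {m : M} :
    m ∈ FS a ↔ ∃ s : Finset ℕ, s.Nonempty ∧ ∑ i ∈ s, a.get i = m := by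
  refine ⟨fun h => ?_, fun ⟨s, hs, hm⟩ => hm ▸ FS.finsetSum a s hs⟩
  induction h with
  | head' a => exact ⟨{0}, singleton_nonempty 0, sum_singleton _ 0⟩
  | tail' a m _ ih =>
    obtain ⟨s, hs, rfl⟩ := ih
    exact ⟨s.map (addRightEmbedding 1), hs.map, by simp [Stream'.get_tail]⟩
  | cons' a m _ ih =>
    obtain ⟨s, hs, rfl⟩ := ih
    refine ⟨cons 0 (s.map (addRightEmbedding 1)) (by simp), cons_nonempty _, ?_⟩
    simp [Stream'.get_tail, Stream'.head]

theorem FS.get_injective {G : Type*} [AddCommGroup G] [Module (ZMod 2) G] {a : Stream' G}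
    (h0 : 0 ∉ FS a) : Function.Injective a.get := by
  intro i j hij
  by_contra hne
  rcases lt_or_gt_of_ne hne with hlt | hlt
  · exact h0 (by simpa [hij, ZModModule.add_self] using FS.add_two a i j hlt)
  · exact h0 (by simpa [hij, ZModModule.add_self] using FS.add_two a j i hlt)

end Hindman

theorem DirectSum.sum_of_ne_zero {ι R : Type*} [DecidableEq ι] [AddCommMonoid R] {r : R}
    (hr : r ≠ 0) {s : Finset ι} (hs : s.Nonempty) :
    ∑ i ∈ s, DirectSum.of (fun _ : ι => R) i r ≠ 0 := by
  obtain ⟨j, hj⟩ := hs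
  intro h
  exact hr (by simpa [DirectSum.of_apply, hj] using congrArg (· j) h)

theorem DirectSum.zero_notMem_FS_of {R : Type*} [AddCommMonoid R] {r : R} (hr : r ≠ 0) :
    0 ∉ FS (fun n => DirectSum.of (fun _ : ℕ => R) n r) := fun h => by
  obtain ⟨s, hs, hsum⟩ := mem_FS_iff.1 h
  exact sum_of_ne_zero hr hs hsum

/-- For each finite coloring of the direct sum `⊕ₙ ℤ/2`, there is an infinite
subgroup `H` with `H \ {0}` monochromatic. -/
theorem directSum_zmod2_mono_subgroup (C : Type*) [Finite C]
    (c : DirectSum ℕ (fun _ => ZMod 2) → C) :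
    ∃ H : AddSubgroup (DirectSum ℕ (fun _ => ZMod 2)), Infinite H ∧
      ∃ col : C, ∀ x ∈ H, x ≠ 0 → c x = col := by
  set e : Stream' (DirectSum ℕ (fun _ => ZMod 2)) := fun n => DirectSum.of _ n 1
  obtain ⟨_, ⟨col, rfl⟩, b, hb⟩ := FS_partition_regular e
    (Set.range fun col => c ⁻¹' {col} ∩ FS e) (Set.finite_range _)
    (fun x hx => ⟨c ⁻¹' {c x} ∩ FS e, ⟨c x, rfl⟩, rfl, hx⟩)
  have hb0 : 0 ∉ FS b := fun h => DirectSum.zero_notMem_FS_of one_ne_zero (hb h).2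
  refine ⟨AddSubgroup.closure (Set.range b.get), ?_, col, fun x hx hx0 => ?_⟩
  · exact Set.infinite_coe_iff.2 <|
      (Set.infinite_range_of_injective (FS.get_injective hb0)).mono AddSubgroup.subset_closure
  · obtain ⟨s, rfl⟩ := ZModModule.exists_sum_eq_of_mem_closure_range hx
    exact (hb (mem_FS_iff.2 ⟨s, nonempty_of_sum_ne_zero hx0, rfl⟩)).1
end

section
/- Let S be an infinite, finitely synchronizing semigroup. For each finite coloring of S, there is an infinite subsemigroup T of S such that all but finitely many elements of T have the same color. -/
/-- Let `S` be an infinite, finitely synchronizing semigroup (there is a finite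
`F ⊆ S` with `a * b ∈ {a, b} ∪ F` for all `a, b ∈ S`). For each finite coloring
of `S`, there is an infinite subsemigroup `T` of `S` that is almost-monochromatic:
all but finitely many elements of `T` have the same color. -/
theorem finitelySynchronizing_almostMono (S : Type*) [Semigroup S] [Infinite S]
    (F : Finset S) (hsync : ∀ a b : S, a * b = a ∨ a * b = b ∨ a * b ∈ F)
    (C : Type*) [Finite C] (c : S → C) :
    ∃ T : Subsemigroup S, Infinite T ∧
      ∃ col : C, {x ∈ (T : Set S) | c x ≠ col}.Finite := by
  obtain ⟨col, hcol⟩ := Finite.exists_infinite_fiber c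
  set A : Set S := c ⁻¹' {col} with hA
  -- A ∪ F is closed under multiplication
  have hclosed : ∀ a ∈ A ∪ ↑F, ∀ b ∈ A ∪ ↑F, a * b ∈ A ∪ ↑F := by
    intro a ha b hb
    rcases hsync a b with h | h | h
    · rw [h]; exact ha
    · rw [h]; exact hb
    · exact Or.inr h
  let U : Subsemigroup S := ⟨A ∪ ↑F, fun {a b} ha hb => hclosed a ha b hb⟩
  refine ⟨Subsemigroup.closure A, ?_, col, ?_⟩
  · rw [Set.infinite_coe_iff] at hcol
    exact (hcol.mono Subsemigroup.subset_closure).to_subtype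
  · have hle : Subsemigroup.closure A ≤ U :=
      Subsemigroup.closure_le.2 Set.subset_union_left
    apply F.finite_toSet.subset
    rintro x ⟨hxT, hxc⟩
    rcases hle hxT with h | h
    · exact absurd h hxc
    · exact h
end

section
/- Let G be a group. There is a 2-coloring of G such that for every infinite periodic subgroup H ≤ G that is almost-monochromatic, H contains a subgroup isomorphic to ⊕_n ℤ/2. -/
/-!
Well-order `G` and colour `x` by whether `x` precedes `x⁻¹`: then `x` and `x⁻¹` get different
colours unless `x⁻¹ = x`, so an almost-monochromatic subgroup `H` has only finitely many elements
that are not involutions. When `H` is infinite this makes every `g ∈ H` an involution: cofinitely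
many `z` satisfy `z⁻¹ = z` and `(g z)⁻¹ = g z`, hence conjugate `g` to `g⁻¹`, and two such `z`, `w`
with `z w` of the same kind give `g = g⁻¹`. Then `H` is an infinite vector space over `𝔽₂`, and
countably many vectors of a basis span a copy of `⊕ₙ ℤ/2`.
-/

open Filter Function

theorem Function.Involutive.exists_fin_two_coloring {α : Type*} {σ : α → α}
    (hσ : Involutive σ) : ∃ c : α → Fin 2, ∀ x, σ x ≠ x → c (σ x) ≠ c x := by
  classical
  refine ⟨fun x => if WellOrderingRel x (σ x) then 0 else 1, fun x hx => ?_⟩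
  rcases trichotomous_of WellOrderingRel x (σ x) with h | h | h
  · simp [hσ x, h, asymm h]
  · exact absurd h.symm hx
  · simp [hσ x, h, asymm h]

theorem finite_setOf_apply_ne_self {α β : Type*} {σ : α → α} (hσ : Injective σ) {c : α → β}
    (hc : ∀ x, σ x ≠ x → c (σ x) ≠ c x) {b : β} (hb : {x | c x ≠ b}.Finite) :
    {x | σ x ≠ x}.Finite := by
  refine (hb.union (hb.preimage hσ.injOn)).subset fun x hx => ?_
  by_cases hxb : c x = b
  · exact Or.inr (hxb ▸ hc x hx)
  · exact Or.inl hxb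

theorem Filter.Eventually.exists_mul_cofinite {M : Type*} [Mul M] [IsLeftCancelMul M]
    [Infinite M] {p : M → Prop} (h : ∀ᶠ x in cofinite, p x) :
    ∃ z w, p z ∧ p w ∧ p (z * w) := by
  obtain ⟨z, hz⟩ := h.exists
  obtain ⟨w, hw, hzw⟩ := (h.and ((mul_right_injective z).tendsto_cofinite.eventually h)).exists
  exact ⟨z, w, hz, hw, hzw⟩

section Group

variable {K : Type*} [Group K]

theorem conj_eq_inv_of_inv_eq_self {g z : K} (hz : z⁻¹ = z) (hgz : (g * z)⁻¹ = g * z) :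
    z * g * z⁻¹ = g⁻¹ := by
  rw [mul_inv_rev, hz] at hgz
  calc z * g * z⁻¹ = z * (g * z) := by rw [hz, mul_assoc]
    _ = z * z * g⁻¹ := by rw [← hgz, mul_assoc]
    _ = g⁻¹ := by rw [mul_eq_one_iff_eq_inv.2 hz.symm, one_mul]

theorem inv_eq_self_of_conj_eq_inv {g z w : K} (hz : z * g * z⁻¹ = g⁻¹)
    (hw : w * g * w⁻¹ = g⁻¹) (hzw : z * w * g * (z * w)⁻¹ = g⁻¹) : g⁻¹ = g :=
  calc g⁻¹ = z * (w * g * w⁻¹) * z⁻¹ := by rw [← hzw]; group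
    _ = (z * g * z⁻¹)⁻¹ := by rw [hw]; group
    _ = g := by rw [hz, inv_inv]

theorem inv_eq_self_of_finite_setOf_inv_ne [Infinite K] (h : {g : K | g⁻¹ ≠ g}.Finite)
    (g : K) : g⁻¹ = g := by
  have hinv : ∀ᶠ z in cofinite, z⁻¹ = z := eventually_cofinite.2 h
  have hconj : ∀ᶠ z in cofinite, z * g * z⁻¹ = g⁻¹ :=
    (hinv.and ((mul_right_injective g).tendsto_cofinite.eventually hinv)).mono
      fun _ hz => conj_eq_inv_of_inv_eq_self hz.1 hz.2
  obtain ⟨z, w, hz, hw, hzw⟩ := hconj.exists_mul_cofinite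
  exact inv_eq_self_of_conj_eq_inv hz hw hzw

end Group

theorem exists_injective_linearMap_finsupp_nat (k V : Type*) [DivisionRing k] [Finite k]
    [AddCommGroup V] [Module k V] [Infinite V] : ∃ f : (ℕ →₀ k) →ₗ[k] V, Injective f := by
  let b := Module.Basis.ofVectorSpace k V
  have : Infinite (Module.Basis.ofVectorSpaceIndex k V) := by
    by_contra!
    have := Module.Finite.of_basis b
    have := Module.finite_of_finite k (M := V)
    exact not_finite V
  exact ⟨Finsupp.linearCombination k (b ∘ Infinite.natEmbedding _),
    b.linearIndependent.comp _ (Infinite.natEmbedding _).injective⟩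

theorem exists_injective_monoidHom_of_inv_eq_self {K : Type*} [Group K] [Infinite K]
    (h : ∀ g : K, g⁻¹ = g) :
    ∃ f : Multiplicative (DirectSum ℕ (fun _ => ZMod 2)) →* K, Injective f := by
  let : CommGroup K := { mul_comm a b := by rw [← h (a * b), mul_inv_rev, h a, h b] }
  let : Module (ZMod 2) (Additive K) := AddCommGroup.zmodModule fun x => by
    rw [two_nsmul, ← neg_eq_iff_add_eq_zero]; exact h x.toMul
  obtain ⟨f, hf⟩ := exists_injective_linearMap_finsupp_nat (ZMod 2) (Additive K)
  let e := finsuppLEquivDirectSum (ZMod 2) (ZMod 2) ℕ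
  exact ⟨AddMonoidHom.toMultiplicativeLeft (f.comp e.symm.toLinearMap).toAddMonoidHom,
    fun x y hxy => e.symm.injective (hf hxy)⟩

/-- For each group `G` there is a 2-coloring of `G` such that every infinite,
periodic, almost-monochromatic subgroup `H ≤ G` contains a subgroup isomorphic to
`⊕ₙ ℤ/2`. -/
theorem group_true_coloring (G : Type*) [Group G] :
    ∃ c : G → Fin 2, ∀ H : Subgroup G, Infinite H →
      (∀ h ∈ H, IsOfFinOrder h) →
      (∃ col : Fin 2, {x ∈ (H : Set G) | c x ≠ col}.Finite) →
      ∃ f : Multiplicative (DirectSum ℕ (fun _ => ZMod 2)) →* G,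
        Function.Injective f ∧ ∀ x, f x ∈ H := by
  obtain ⟨c, hc⟩ := (inv_involutive (G := G)).exists_fin_two_coloring
  refine ⟨c, fun H _ _ ⟨col, hcol⟩ => ?_⟩
  have hcolH : {k : H | c k ≠ col}.Finite :=
    (hcol.preimage Subtype.val_injective.injOn).subset fun k hk => ⟨k.2, hk⟩
  have hinvH : {k : H | k⁻¹ ≠ k}.Finite :=
    finite_setOf_apply_ne_self inv_injective
      (fun k hk => hc k (Subtype.val_injective.ne hk)) hcolH
  obtain ⟨f, hf⟩ :=
    exists_injective_monoidHom_of_inv_eq_self (inv_eq_self_of_finite_setOf_inv_ne hinvH)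
  exact ⟨H.subtype.comp f, H.subtype_injective.comp hf, fun x => (f x).2⟩
end

section
/- There is a 2-coloring of the natural numbers ℕ (with addition) such that no infinite subsemigroup of (ℕ,+) is almost-monochromatic. -/
/-!
Colour `n` by the parity of `⌊log₂ n⌋`. An infinite additively closed set `T` contains some
`a > 0` together with all its positive multiples, and once `2 ^ k ≥ a` some multiple of `a` lies
in `[2 ^ k, 2 ^ (k + 1))`. So `⌊log₂⌋` maps `T` onto a cofinite set of exponents, and both colours
occur infinitely often on `T`.
-/

open Filter

theorem nsmul_mem_of_add_mem {M : Type*} [AddMonoid M] {T : Set M}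
    (hT : ∀ a ∈ T, ∀ b ∈ T, a + b ∈ T) {a : M} (ha : a ∈ T) {n : ℕ} (hn : 0 < n) :
    n • a ∈ T := by
  induction n, hn using Nat.le_induction with
  | base => simpa using ha
  | succ n _ ih => simpa [succ_nsmul] using hT _ ih _ ha

theorem Nat.exists_pos_mul_mem_Ico_two_mul {a m : ℕ} (ha : 0 < a) (hm : a ≤ m) :
    ∃ n, 0 < n ∧ n * a ∈ Set.Ico m (2 * m) := by
  -- `n = ⌈m / a⌉`
  refine ⟨(m - 1) / a + 1, Nat.succ_pos _, ?_, ?_⟩ <;>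
  · have := Nat.div_add_mod (m - 1) a
    have := Nat.mod_lt (m - 1) ha
    rw [add_one_mul, mul_comm]
    omega

theorem eventually_exists_mem_log_two_eq {T : Set ℕ} (hT : ∀ a ∈ T, ∀ b ∈ T, a + b ∈ T)
    {a : ℕ} (haT : a ∈ T) (ha : 0 < a) : ∀ᶠ k in atTop, ∃ x ∈ T, Nat.log 2 x = k := by
  refine eventually_atTop.2 ⟨a, fun k hk => ?_⟩
  obtain ⟨n, hn, hlo, hhi⟩ :=
    Nat.exists_pos_mul_mem_Ico_two_mul ha (hk.trans k.lt_two_pow_self.le)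
  refine ⟨n * a, by simpa using nsmul_mem_of_add_mem hT haT hn, ?_⟩
  exact Nat.log_eq_of_pow_le_of_lt_pow hlo (by rwa [pow_succ'])

theorem Fin.frequently_ofNat_ne {n : ℕ} [NeZero n] (hn : n ≠ 1) (i : Fin n) :
    ∃ᶠ k : ℕ in atTop, Fin.ofNat n k ≠ i := by
  refine frequently_atTop.2 fun N => ?_
  by_cases h : Fin.ofNat n N = i
  · refine ⟨N + 1, N.le_succ, fun h' => hn ?_⟩
    have hmod : N + 0 ≡ N + 1 [MOD n] := (Fin.ext_iff.1 (h.trans h'.symm) :)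
    exact Nat.dvd_one.1 ((Nat.modEq_iff_dvd' zero_le_one).1 (Nat.ModEq.add_left_cancel' N hmod))
  · exact ⟨N, le_rfl, h⟩

/-- There is a 2-coloring of `ℕ` such that no infinite subsemigroup of `(ℕ, +)`
is almost-monochromatic. -/
theorem nat_coloring_no_almostMono_subsemigroup :
    ∃ c : ℕ → Fin 2, ∀ T : Set ℕ, T.Nonempty →
      (∀ a ∈ T, ∀ b ∈ T, a + b ∈ T) → T.Infinite →
      ¬ ∃ col : Fin 2, {x ∈ T | c x ≠ col}.Finite := by
  refine ⟨fun n => Fin.ofNat 2 (Nat.log 2 n), ?_⟩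
  rintro T - hT hinf ⟨col, hfin⟩
  obtain ⟨a, haT, ha⟩ := hinf.exists_gt 0
  have hrare : ∀ᶠ k in atTop,
      k ∉ Nat.log 2 '' {x ∈ T | Fin.ofNat 2 (Nat.log 2 x) ≠ col} := by
    rw [← Nat.cofinite_eq_atTop]
    exact (hfin.image _).eventually_cofinite_notMem
  obtain ⟨_, hne, ⟨x, hxT, rfl⟩, hx⟩ :=
    ((Fin.frequently_ofNat_ne (by decide) col).and_eventually
      ((eventually_exists_mem_log_two_eq hT haT ha).and hrare)).exists
  exact hx ⟨x, ⟨hxT, hne⟩, rfl⟩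
end

section
/- For each semigroup S, there is a 2-coloring of S such that every almost-monochromatic subsemigroup of S is periodic, and every infinite almost-monochromatic subgroup of S contains a subgroup isomorphic to ⊕_n ℤ/2. -/
/-- `spow a n = a^(n+1)`: the `(n+1)`-st power of `a` in a semigroup. -/
def spow {S : Type*} [Semigroup S] (a : S) : ℕ → S
  | 0 => a
  | n + 1 => spow a n * a

/-- A subset `G` of a semigroup `S` forms a group with identity `e`. -/
def IsSubgroupSet {S : Type*} [Semigroup S] (G : Set S) (e : S) : Prop :=
  e ∈ G ∧ (∀ x ∈ G, ∀ y ∈ G, x * y ∈ G) ∧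
    (∀ x ∈ G, e * x = x ∧ x * e = x) ∧
    ∀ x ∈ G, ∃ y ∈ G, x * y = e ∧ y * x = e

/-!
Colour `x` by one of two rules. If its squaring orbit `x, x², x⁴, …` is injective, the colours
of `x` and `x²` differ (a proper colouring of the forest that squaring forms on such points);
otherwise `x` is coloured differently from its inverse in a subgroup containing it, whenever that
inverse exists and is not `x` itself.

A subsemigroup containing a non-periodic `t` contains the squaring orbit of `t`, which is
injective and alternates in colour, so it is not almost monochromatic. In an almost-monochromatic
subgroup every element is therefore coloured by the second rule, and since inverse pairs get
different colours only finitely many elements are not involutions. If the group is infinite,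
almost every `t` then conjugates any given `g` to `g⁻¹`, which forces `g² = 1`; so the group is an
infinite `𝔽₂`-vector space and contains `⊕ₙ ℤ/2`.
-/

open Function Set

section Iterate

variable {α : Type*} (f : α → α)

theorem finite_range_iterate_of_iterate_eq {x : α} {i j : ℕ} (hij : i < j)
    (h : f^[i] x = f^[j] x) : (range fun n => f^[n] x).Finite := by
  obtain ⟨p, hp, rfl⟩ : ∃ p, 0 < p ∧ j = p + i := ⟨j - i, by omega, by omega⟩
  have hper : IsPeriodicPt f p (f^[i] x) := by
    rw [IsPeriodicPt, IsFixedPt, ← iterate_add_apply, h]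
  refine ((finite_Iio (p + i)).image fun n => f^[n] x).subset ?_
  rintro _ ⟨n, rfl⟩
  rcases lt_or_ge n i with hn | hn
  · exact ⟨n, mem_Iio.2 (by omega), rfl⟩
  · refine ⟨(n - i) % p + i, mem_Iio.2 (by have := Nat.mod_lt (n - i) hp; omega), ?_⟩
    simp only
    rw [iterate_add_apply, hper.iterate_mod_apply, ← iterate_add_apply, Nat.sub_add_cancel hn]

theorem injective_iterate_of_infinite_range {x : α} (h : (range fun n => f^[n] x).Infinite) :
    Injective fun n => f^[n] x := by
  intro a b hab
  by_contra hne
  rcases lt_or_gt_of_ne hne with hlt | hlt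
  · exact h (finite_range_iterate_of_iterate_eq f hlt hab)
  · exact h (finite_range_iterate_of_iterate_eq f hlt hab.symm)

theorem injective_iterate_of_iterate_eq {x y : α} {m k : ℕ} (h : f^[m] x = f^[k] y)
    (hx : Injective fun n => f^[n] x) : Injective fun n => f^[n] y := by
  intro a b hab
  have key : ∀ a, f^[a + m] x = f^[a + k] y := fun a => by
    rw [iterate_add_apply, h, ← iterate_add_apply]
  have : f^[a + k] y = f^[b + k] y := by
    rw [add_comm a, add_comm b, iterate_add_apply, iterate_add_apply]
    exact congrArg f^[k] hab
  exact Nat.add_right_cancel (hx ((key a).trans (this.trans (key b).symm)))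

def orbitMeetSetoid : Setoid α where
  r x y := ∃ m k, f^[m] x = f^[k] y
  iseqv.refl _ := ⟨0, 0, rfl⟩
  iseqv.symm := fun ⟨m, k, h⟩ => ⟨k, m, h.symm⟩
  iseqv.trans := fun ⟨m, k, h⟩ ⟨p, q, h'⟩ => ⟨p + m, k + q, by
    rw [iterate_add_apply, h, ← iterate_add_apply, add_comm, iterate_add_apply, h',
      ← iterate_add_apply]⟩

theorem add_eq_add_of_iterate_eq {x z : α} {m k m' k' : ℕ} (h : f^[m] x = f^[k] z)
    (h' : f^[m'] x = f^[k'] z) (hz : Injective fun n => f^[n] z) : m + k' = m' + k := by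
  apply hz
  simp only
  rw [iterate_add_apply, ← h', ← iterate_add_apply, add_comm, iterate_add_apply, h,
    ← iterate_add_apply]

/-- On the points with injective orbit the functional graph of `f` is a forest; the parity of the
height relative to a chosen point of each component colours it properly. -/
theorem exists_coloring_apply_ne : ∃ c : α → Fin 2,
    ∀ x, (Injective fun n => f^[n] x) → c (f x) ≠ c x := by
  have hrep : ∀ x, ∃ m k, f^[m] x = f^[k] (Quotient.mk (orbitMeetSetoid f) x).out := fun x =>
    let ⟨m, k, h⟩ := Quotient.mk_out (s := orbitMeetSetoid f) x
    ⟨k, m, h.symm⟩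
  choose m k hmk using hrep
  refine ⟨fun x => ⟨(m x + k x) % 2, Nat.mod_lt _ two_pos⟩, fun x hx hc => ?_⟩
  have hsame : Quotient.mk (orbitMeetSetoid f) (f x) = Quotient.mk _ x :=
    Quotient.sound ⟨0, 1, rfl⟩
  have hfx : f^[m (f x) + 1] x = f^[k (f x)] (Quotient.mk (orbitMeetSetoid f) x).out := by
    rw [iterate_add_apply, ← hsame]; exact hmk (f x)
  have hheight :=
    add_eq_add_of_iterate_eq f (hmk x) hfx (injective_iterate_of_iterate_eq f (hmk x) hx)
  have hparity := Fin.val_eq_of_eq hc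
  simp only at hparity
  omega

theorem Function.Involutive.exists_coloring_apply_ne {σ : α → α} (hσ : Involutive σ) :
    ∃ c : α → Fin 2, ∀ x, σ x ≠ x → c (σ x) ≠ c x := by
  let _ : LinearOrder α := IsWellOrder.linearOrder WellOrderingRel
  refine ⟨fun x => if x < σ x then 0 else 1, fun x hx => ?_⟩
  rcases hx.lt_or_gt with h | h <;> simp [hσ x, h, h.not_gt]

theorem exists_coloring_apply_ne_of_involutive {σ : α → α} (hσ : Involutive σ) :
    ∃ c : α → Fin 2, (∀ x, (Injective fun n => f^[n] x) → c (f x) ≠ c x) ∧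
      ∀ x, (¬Injective fun n => f^[n] x) → (¬Injective fun n => f^[n] (σ x)) →
        σ x ≠ x → c (σ x) ≠ c x := by
  classical
  obtain ⟨c₁, hc₁⟩ := exists_coloring_apply_ne f
  obtain ⟨c₂, hc₂⟩ := hσ.exists_coloring_apply_ne
  refine ⟨fun x => if Injective (fun n => f^[n] x) then c₁ x else c₂ x, fun x hx => ?_,
    fun x hx hσx hne => ?_⟩
  · have hfx : Injective fun n => f^[n] (f x) :=
      injective_iterate_of_iterate_eq f (m := 1) (k := 0) rfl hx
    simpa only [if_pos hx, if_pos hfx] using hc₁ x hx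
  · simpa only [if_neg hx, if_neg hσx] using hc₂ x hne

theorem infinite_setOf_ne_of_alternating {u : ℕ → α} (hu : Injective u) {c : α → Fin 2}
    (hc : ∀ n, c (u (n + 1)) ≠ c (u n)) (col : Fin 2) : {y ∈ range u | c y ≠ col}.Infinite := by
  have hper : ∀ j n, c (u (2 * n + j)) = c (u j) := by
    have fin2 : ∀ a b d : Fin 2, a ≠ b → b ≠ d → a = d := by decide
    intro j n
    induction n with
    | zero => simp
    | succ n ih =>
      rw [← ih]
      exact fin2 _ _ _ (by simpa [Nat.mul_succ, add_right_comm] using hc (2 * n + j + 1))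
        (by simpa [add_right_comm] using hc (2 * n + j))
  obtain ⟨j, hj⟩ : ∃ j, c (u j) ≠ col := by
    by_cases h0 : c (u 0) = col
    · exact ⟨1, h0 ▸ hc 0⟩
    · exact ⟨0, h0⟩
  refine infinite_of_injective_forall_mem (f := fun n => u (2 * n + j))
    (fun a b hab => by have := hu hab; omega) fun n => ⟨mem_range_self _, ?_⟩
  simpa only [hper] using hj

theorem not_injective_iterate_of_finite_setOf_ne {c : α → Fin 2}
    (hc : ∀ x, (Injective fun n => f^[n] x) → c (f x) ≠ c x) {A : Set α} (hA : MapsTo f A A)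
    {col : Fin 2} (hfin : {x ∈ A | c x ≠ col}.Finite) {t : α} (ht : t ∈ A) :
    ¬Injective fun n => f^[n] t := by
  intro hinj
  refine infinite_setOf_ne_of_alternating (c := c) hinj (fun n => ?_) col (hfin.subset ?_)
  · rw [iterate_succ_apply']
    exact hc _ (injective_iterate_of_iterate_eq f (m := n) (k := 0) rfl hinj)
  · rintro _ ⟨⟨n, rfl⟩, hn⟩
    exact ⟨hA.iterate n ht, hn⟩

theorem Function.Involutive.finite_of_coloring {σ : α → α} (hσ : Involutive σ) {c : α → Fin 2}
    {s : Set α} (hs : MapsTo σ s s) (hc : ∀ x ∈ s, c (σ x) ≠ c x) {col : Fin 2}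
    (hfin : {x ∈ s | c x ≠ col}.Finite) : s.Finite := by
  refine (hfin.union (hfin.image σ)).subset fun x hx => ?_
  by_cases hcx : c x = col
  · exact Or.inr ⟨σ x, ⟨hs hx, hcx ▸ hc x hx⟩, hσ x⟩
  · exact Or.inl ⟨hx, hcx⟩

end Iterate

section InfiniteGroup

variable {H : Type*} [Group H]

theorem finite_setOf_conj_ne_inv (hB : {x : H | x * x ≠ 1}.Finite) (g : H) :
    {t : H | t * g * t⁻¹ ≠ g⁻¹}.Finite := by
  refine (hB.union (hB.preimage (mul_right_injective g).injOn)).subset fun t ht => ?_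
  by_contra hmem
  simp only [mem_union, mem_ofPred_eq, mem_preimage, not_or, not_not] at hmem
  obtain ⟨htt, hgt⟩ := hmem
  have ht_inv : t⁻¹ = t := inv_eq_of_mul_eq_one_right htt
  refine ht (eq_inv_of_mul_eq_one_left ?_)
  calc t * g * t⁻¹ * g = t * g * t * g := by rw [ht_inv]
    _ = t * (g * t * (g * t)) * t⁻¹ := by group
    _ = 1 := by rw [hgt, mul_one, mul_inv_cancel]

theorem mul_self_eq_one_of_finite [Infinite H] (hB : {x : H | x * x ≠ 1}.Finite) (g : H) :
    g * g = 1 := by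
  have hC := finite_setOf_conj_ne_inv hB g
  obtain ⟨t, ht⟩ := hC.infinite_compl.nonempty
  obtain ⟨s, hs⟩ := (hC.union (hC.preimage (mul_right_injective t).injOn)).infinite_compl.nonempty
  simp only [mem_compl_iff, mem_union, mem_ofPred_eq, mem_preimage, not_or, not_not] at ht hs
  obtain ⟨hs, hts⟩ := hs
  -- conjugation by `t`, `s` and `t * s` all invert `g`, so `g⁻¹ = g`
  have : g⁻¹ = g := by
    calc g⁻¹ = t * s * g * (t * s)⁻¹ := hts.symm
      _ = t * (s * g * s⁻¹) * t⁻¹ := by group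
      _ = (t * g * t⁻¹)⁻¹ := by rw [hs]; group
      _ = g := by rw [ht, inv_inv]
  exact mul_eq_one_iff_eq_inv.2 this.symm

end InfiniteGroup

theorem exists_injective_directSum_zmod_two {V : Type*} [AddCommGroup V] [Infinite V]
    (h : ∀ x : V, x + x = 0) : ∃ f : (DirectSum ℕ fun _ => ZMod 2) →+ V, Injective f := by
  let _ : Module (ZMod 2) V := AddCommGroup.zmodModule fun x => (two_nsmul x).trans (h x)
  let b := Module.Basis.ofVectorSpace (ZMod 2) V
  have : Infinite (Module.Basis.ofVectorSpaceIndex (ZMod 2) V) := by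
    by_contra hfin
    rw [not_infinite_iff_finite] at hfin
    have := Module.Finite.of_basis b
    have := Module.finite_of_finite (ZMod 2) (M := V)
    exact _root_.not_finite V
  have hli : Injective (Finsupp.linearCombination (ZMod 2) (b ∘ Infinite.natEmbedding _)) :=
    b.linearIndependent.comp _ (Infinite.natEmbedding _).injective
  let e := (finsuppLEquivDirectSum (ZMod 2) (ZMod 2) ℕ).symm
  exact ⟨((Finsupp.linearCombination (ZMod 2) _).comp e.toLinearMap).toAddMonoidHom,
    hli.comp e.injective⟩

section Semigroup

variable {S : Type*} [Semigroup S]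

theorem coe_spow (a : S) (n : ℕ) : ((spow a n : S) : WithOne S) = (a : WithOne S) ^ (n + 1) := by
  induction n with
  | zero => simp [spow]
  | succ n ih => rw [spow, WithOne.coe_mul, ih, pow_succ _ (n + 1)]

theorem spow_eq_iterate (a : S) (n : ℕ) : spow a n = (· * a)^[n] a := by
  induction n with
  | zero => rfl
  | succ n ih => rw [iterate_succ_apply', ← ih]; rfl

theorem iterate_mul_self (a : S) (n : ℕ) : (fun x => x * x)^[n] a = spow a (2 ^ n - 1) := by
  apply WithOne.coe_injective
  rw [coe_spow, Nat.sub_add_cancel Nat.one_le_two_pow]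
  induction n with
  | zero => simp
  | succ n ih => rw [iterate_succ_apply', WithOne.coe_mul, ih, ← pow_add, pow_succ, mul_two]

theorem injective_iterate_mul_self {a : S} (h : (range (spow a)).Infinite) :
    Injective fun n => (fun x : S => x * x)^[n] a := by
  have hspow : Injective (spow a) := by
    rw [funext (spow_eq_iterate a)] at h ⊢
    exact injective_iterate_of_infinite_range _ h
  intro m n hmn
  simp only [iterate_mul_self] at hmn
  have hpred := hspow hmn
  have hm := @Nat.one_le_two_pow m
  have hn := @Nat.one_le_two_pow n
  exact Nat.pow_right_injective le_rfl (show 2 ^ m = 2 ^ n by omega)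

/-- `y` is the inverse of `x` in a subgroup of `S` containing both. -/
def IsGroupInverse (x y : S) : Prop :=
  x * y * x = x ∧ y * x * y = y ∧ x * y = y * x

theorem IsGroupInverse.symm {x y : S} (h : IsGroupInverse x y) : IsGroupInverse y x :=
  ⟨h.2.1, h.1, h.2.2.symm⟩

theorem IsGroupInverse.unique {x y z : S} (hy : IsGroupInverse x y) (hz : IsGroupInverse x z) :
    y = z := by
  obtain ⟨hxyx, hyxy, hxy⟩ := hy
  obtain ⟨hxzx, hzxz, hxz⟩ := hz
  have hidem : x * y = x * z :=
    calc x * y = y * (x * z * x) := by rw [hxzx, hxy]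
      _ = y * x * (z * x) := by simp only [mul_assoc]
      _ = x * y * x * z := by rw [← hxy, ← hxz]; simp only [mul_assoc]
      _ = x * z := by rw [hxyx]
  calc y = y * (x * z) := by rw [← hidem, ← mul_assoc, hyxy]
    _ = x * z * z := by rw [← mul_assoc, ← hxy, hidem]
    _ = z := by rw [hxz, hzxz]

open Classical in
/-- The inverse of `x` in a subgroup containing it, and `x` itself if there is none. -/
noncomputable def groupInv (x : S) : S :=
  if h : ∃ y, IsGroupInverse x y then h.choose else x

theorem groupInv_eq {x y : S} (h : IsGroupInverse x y) : groupInv x = y := by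
  have hex : ∃ y, IsGroupInverse x y := ⟨y, h⟩
  rw [groupInv, dif_pos hex]
  exact hex.choose_spec.unique h

theorem groupInv_involutive : Involutive (groupInv : S → S) := by
  intro x
  by_cases h : ∃ y, IsGroupInverse x y
  · obtain ⟨y, hy⟩ := h
    rw [groupInv_eq hy, groupInv_eq hy.symm]
  · have hx : groupInv x = x := by rw [groupInv, dif_neg h]
    rw [hx, hx]

namespace IsSubgroupSet

variable {G : Set S} {e : S}

theorem groupInv_mem (hG : IsSubgroupSet G e) {x : S} (hx : x ∈ G) :
    groupInv x ∈ G ∧ x * groupInv x = e ∧ groupInv x * x = e := by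
  obtain ⟨y, hy, hxy, hyx⟩ := hG.2.2.2 x hx
  rw [groupInv_eq ⟨by rw [hxy, (hG.2.2.1 x hx).1], by rw [hyx, (hG.2.2.1 y hy).1],
    hxy.trans hyx.symm⟩]
  exact ⟨hy, hxy, hyx⟩

noncomputable abbrev group (hG : IsSubgroupSet G e) : Group G where
  mul a b := ⟨a * b, hG.2.1 _ a.2 _ b.2⟩
  mul_assoc a b c := Subtype.ext (mul_assoc (a : S) b c)
  one := ⟨e, hG.1⟩
  one_mul a := Subtype.ext (hG.2.2.1 a a.2).1
  mul_one a := Subtype.ext (hG.2.2.1 a a.2).2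
  inv a := ⟨groupInv a, (hG.groupInv_mem a.2).1⟩
  inv_mul_cancel a := Subtype.ext (hG.groupInv_mem a.2).2.2

theorem finite_setOf_mul_self_ne (hG : IsSubgroupSet G e) {c : S → Fin 2}
    (hc : ∀ x ∈ G, groupInv x ≠ x → c (groupInv x) ≠ c x) {col : Fin 2}
    (hcol : {x ∈ G | c x ≠ col}.Finite) : {x ∈ G | x * x ≠ e}.Finite := by
  have hs : {x ∈ G | groupInv x ≠ x}.Finite := by
    refine groupInv_involutive.finite_of_coloring (fun x hx => ⟨(hG.groupInv_mem hx.1).1, ?_⟩)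
      (fun x hx => hc x hx.1 hx.2) (hcol.subset fun x hx => ⟨hx.1.1, hx.2⟩)
    rw [groupInv_involutive x]
    exact hx.2.symm
  refine hs.subset fun x hx => ⟨hx.1, fun hinv => hx.2 ?_⟩
  calc x * x = x * groupInv x := by rw [hinv]
    _ = e := (hG.groupInv_mem hx.1).2.1

theorem exists_injective_directSum_hom (hG : IsSubgroupSet G e) (hGinf : G.Infinite)
    (hfin : {x ∈ G | x * x ≠ e}.Finite) :
    ∃ f : DirectSum ℕ (fun _ => ZMod 2) → S, Injective f ∧
      (∀ x y, f (x + y) = f x * f y) ∧ ∀ x, f x ∈ G := by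
  let _ := hG.group
  have _ : Infinite G := hGinf.to_subtype
  have hsq : ∀ g : G, g * g = 1 := mul_self_eq_one_of_finite <|
    (hfin.preimage Subtype.val_injective.injOn).subset fun x hx =>
      ⟨x.2, fun h => hx (Subtype.ext h)⟩
  let _ : CommGroup G := { hG.group with
    mul_comm := fun a b => (Commute.of_orderOf_dvd_two
      (fun g => orderOf_dvd_of_pow_eq_one (by rw [pow_two, hsq])) a b).eq }
  obtain ⟨φ, hφ⟩ := exists_injective_directSum_zmod_two (V := Additive G) fun x => hsq x.toMul
  refine ⟨fun x => ((φ x).toMul : S),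
    Subtype.val_injective.comp (Additive.toMul.injective.comp hφ), fun x y => ?_,
    fun x => (φ x).toMul.2⟩
  simp only [map_add, toMul_add]
  rfl

end IsSubgroupSet

end Semigroup

/-- True Color Lemma: for each semigroup `S` there is a 2-coloring of `S` such that
every almost-monochromatic subsemigroup of `S` is periodic, and every infinite
almost-monochromatic subgroup of `S` contains `⊕ₙ ℤ/2` as a subgroup. -/
theorem true_color_lemma (S : Type*) [Semigroup S] :
    ∃ c : S → Fin 2,
      (∀ T : Subsemigroup S,
        (∃ col : Fin 2, {x ∈ (T : Set S) | c x ≠ col}.Finite) →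
        ∀ t ∈ T, (Set.range (spow t)).Finite) ∧
      (∀ (G : Set S) (e : S), IsSubgroupSet G e → G.Infinite →
        (∃ col : Fin 2, {x ∈ G | c x ≠ col}.Finite) →
        ∃ f : DirectSum ℕ (fun _ => ZMod 2) → S, Function.Injective f ∧
          (∀ x y, f (x + y) = f x * f y) ∧ ∀ x, f x ∈ G) := by
  obtain ⟨c, hsq, hinv⟩ :=
    exists_coloring_apply_ne_of_involutive (fun x : S => x * x) groupInv_involutive
  refine ⟨c, fun T ⟨col, hcol⟩ t ht => ?_, fun G e hG hGinf ⟨col, hcol⟩ => ?_⟩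
  · by_contra h
    exact not_injective_iterate_of_finite_setOf_ne _ hsq (fun x hx => T.mul_mem hx hx) hcol ht
      (injective_iterate_mul_self h)
  · have hper : ∀ x ∈ G, ¬Injective fun n => (fun y : S => y * y)^[n] x := fun x hx =>
      not_injective_iterate_of_finite_setOf_ne _ hsq (fun y hy => hG.2.1 y hy y hy) hcol hx
    exact hG.exists_injective_directSum_hom hGinf (hG.finite_setOf_mul_self_ne
      (fun x hx hne => hinv x (hper x hx) (hper _ (hG.groupInv_mem hx).1) hne) hcol)
end

section
/- An infinite group is never finitely synchronizing. -/
/-! Fix `a ≠ 1`. By cancellation, `a * b` equals neither `a` nor `b` when `b ≠ 1`, so the exceptional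
set contains the infinite set `a • {1}ᶜ`. -/

theorem mul_mem_of_mul_eq_or_mem {M : Type*} [CancelMonoid M] {F : Set M}
    (h : ∀ a b : M, a * b = a ∨ a * b = b ∨ a * b ∈ F) {a b : M} (ha : a ≠ 1) (hb : b ≠ 1) :
    a * b ∈ F := by
  rcases h a b with hab | hab | hab
  · exact absurd (mul_eq_left.mp hab) hb
  · exact absurd (mul_eq_right.mp hab) ha
  · exact hab

theorem Set.infinite_of_mul_eq_or_mem {M : Type*} [CancelMonoid M] [Infinite M] {F : Set M}
    (h : ∀ a b : M, a * b = a ∨ a * b = b ∨ a * b ∈ F) : F.Infinite := by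
  obtain ⟨a, ha⟩ := exists_ne (1 : M)
  have hinf : ((a * ·) '' ({1}ᶜ : Set M)).Infinite :=
    (Set.finite_singleton 1).infinite_compl.image (mul_right_injective a).injOn
  refine hinf.mono ?_
  rintro _ ⟨b, hb, rfl⟩
  exact mul_mem_of_mul_eq_or_mem h ha hb

/-- An infinite group is never finitely synchronizing. -/
theorem infinite_group_not_finitelySynchronizing (G : Type*) [Group G] [Infinite G] :
    ¬ ∃ F : Finset G, ∀ a b : G, a * b = a ∨ a * b = b ∨ a * b ∈ F := by
  rintro ⟨F, h⟩
  exact Set.infinite_of_mul_eq_or_mem h F.finite_toSet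
end

section
/- Let G be an infinite group with a finite coloring, and let a_1, a_2, ... be distinct elements of G such that the set FP̂(a_1,a_2,...) of all products a_{i_1} a_{i_2} ⋯ a_{i_m} over finite sequences of distinct indices is almost-monochromatic. Then there is a subsequence a_{i_1}, a_{i_2}, ... such that FP̂(a_{i_1}, a_{i_2}, ...) is monochromatic. -/
/-!
Let `B` be the finite set of elements of `FP̂(a)` of the wrong colour. Choose indices
`n₀ < n₁ < ⋯` greedily: once `n₀, …, n_{k-1}` are fixed, the products `p`, `q` over distinct
earlier indices form a finite set, so by injectivity of `a` all but finitely many `n` satisfy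
`p * a n * q ∉ B` for all such `p`, `q`; take `n_k` to be one of them. A product over distinct
chosen indices splits at its largest one as `p * a n_k * q` of this form, hence avoids `B`.
-/

/-- `FPhat a` is the set of all products `a i₁ * a i₂ * ⋯ * a i_m` over finite
nonempty sequences of pairwise distinct indices (in any order). -/
def FPhat {S : Type*} [Semigroup S] (a : ℕ → S) : Set S :=
  {x | ∃ (i : ℕ) (l : List ℕ), (i :: l).Nodup ∧
    x = (l.map a).foldl (· * ·) (a i)}

open Filter Finset
open scoped Pointwise

theorem List.foldl_mul_eq_mul_prod {M : Type*} [Monoid M] (l : List M) (x : M) :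
    l.foldl (· * ·) x = x * l.prod := by
  induction l generalizing x with
  | nil => simp
  | cons y l ih => rw [List.foldl_cons, ih, List.prod_cons, mul_assoc]

theorem mem_FPhat_iff {M : Type*} [Monoid M] {a : ℕ → M} {x : M} :
    x ∈ FPhat a ↔ ∃ l : List ℕ, l ≠ [] ∧ l.Nodup ∧ (l.map a).prod = x := by
  constructor
  · rintro ⟨i, l, hnd, rfl⟩
    exact ⟨i :: l, List.cons_ne_nil i l, hnd, by simp [List.foldl_mul_eq_mul_prod]⟩
  · rintro ⟨_ | ⟨i, l⟩, hne, hnd, rfl⟩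
    · exact absurd rfl hne
    · exact ⟨i, l, hnd, by simp [List.foldl_mul_eq_mul_prod]⟩

theorem FPhat_comp_subset {M : Type*} [Monoid M] (a : ℕ → M) {φ : ℕ → ℕ}
    (hφ : Function.Injective φ) : FPhat (a ∘ φ) ⊆ FPhat a := by
  simp only [Set.subset_def, mem_FPhat_iff]
  rintro x ⟨l, hne, hnd, rfl⟩
  exact ⟨l.map φ, by simpa using hne, hnd.map hφ, by simp⟩

def distinctProds {M : Type*} [Monoid M] (a : ℕ → M) (F : Finset ℕ) : Set M :=
  {x | ∃ l : List ℕ, l.Nodup ∧ (∀ i ∈ l, i ∈ F) ∧ (l.map a).prod = x}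

theorem finite_setOf_nodup_forall_mem {α : Type*} (F : Finset α) :
    {l : List α | l.Nodup ∧ ∀ i ∈ l, i ∈ F}.Finite := by
  refine ((List.finite_length_le F F.card).image (List.map Subtype.val)).subset ?_
  rintro l ⟨hnd, hF⟩
  lift l to List F using hF
  exact ⟨l, by simpa using (hnd.of_map _).length_le_card, rfl⟩

theorem distinctProds_finite {M : Type*} [Monoid M] (a : ℕ → M) (F : Finset ℕ) :
    (distinctProds a F).Finite := by
  refine ((finite_setOf_nodup_forall_mem F).image fun l => (l.map a).prod).subset ?_
  rintro x ⟨l, hnd, hF, rfl⟩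
  exact ⟨l, ⟨hnd, hF⟩, rfl⟩

theorem distinctProds_comp_subset {M : Type*} [Monoid M] (a : ℕ → M) {φ : ℕ → ℕ}
    (hφ : Function.Injective φ) (F : Finset ℕ) :
    distinctProds (a ∘ φ) F ⊆ distinctProds a (F.image φ) := by
  rintro x ⟨l, hnd, hF, rfl⟩
  exact ⟨l.map φ, hnd.map hφ, by simpa using fun i hi => ⟨i, hF i hi, rfl⟩, by simp⟩

theorem eventually_cofinite_mul_mul_notMem {ι G : Type*} [Group G] {a : ι → G}
    (ha : Function.Injective a) {P Q B : Set G} (hP : P.Finite) (hQ : Q.Finite)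
    (hB : B.Finite) : ∀ᶠ n in cofinite, ∀ p ∈ P, ∀ q ∈ Q, p * a n * q ∉ B := by
  have hfin : (a ⁻¹' (P⁻¹ * B * Q⁻¹)).Finite :=
    ((hP.inv.mul hB).mul hQ.inv).preimage ha.injOn
  filter_upwards [hfin.eventually_cofinite_notMem] with n hn p hp q hq hpq
  refine hn ⟨_, ⟨p⁻¹, Set.inv_mem_inv.2 hp, _, hpq, rfl⟩, q⁻¹, Set.inv_mem_inv.2 hq, ?_⟩
  group

theorem exists_strictMono_forall_image_range {P : Finset ℕ → ℕ → Prop}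
    (h : ∀ F, ∀ᶠ n in atTop, P F n) :
    ∃ φ : ℕ → ℕ, StrictMono φ ∧ ∀ k, P ((range k).image φ) (φ k) := by
  choose g hgP hgt using fun F => ((h F).and (eventually_gt_atTop (F.sup id))).exists
  let F : ℕ → Finset ℕ := fun k => Nat.rec ∅ (fun _ s => insert (g s) s) k
  have hF : ∀ k, F k = (range k).image (g ∘ F) := by
    intro k
    induction k with
    | zero => rfl
    | succ k ih =>
      change insert (g (F k)) (F k) = _
      rw [range_add_one, image_insert, ← ih]
      rfl
  refine ⟨g ∘ F, strictMono_nat_of_lt_succ fun k => ?_, fun k => hF k ▸ hgP (F k)⟩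
  have hmem : g (F k) ∈ F (k + 1) := mem_insert_self _ _
  exact (le_sup (f := id) hmem).trans_lt (hgt _)

theorem notMem_of_forall_mul_mul_notMem {M : Type*} [Monoid M] {a : ℕ → M} {B : Set M}
    (h : ∀ k, ∀ p ∈ distinctProds a (range k), ∀ q ∈ distinctProds a (range k),
      p * a k * q ∉ B) :
    ∀ x ∈ FPhat a, x ∉ B := by
  simp only [mem_FPhat_iff]
  rintro x ⟨l, hne, hnd, rfl⟩
  obtain ⟨k, hk, hmax⟩ := l.toFinset.exists_max_image id (by simpa using hne)
  simp only [List.mem_toFinset, id] at hk hmax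
  obtain ⟨p, q, rfl⟩ := List.append_of_mem hk
  obtain ⟨hkpq, hpq⟩ := List.nodup_cons.1 (List.nodup_middle.1 hnd)
  have hlt : ∀ i ∈ p ++ q, i ∈ range k := fun i hi => by
    have hik : i ≤ k := hmax i (by simp only [List.mem_append, List.mem_cons] at hi ⊢; tauto)
    exact mem_range.2 (hik.lt_of_ne (by rintro rfl; exact hkpq hi))
  have hp : (p.map a).prod ∈ distinctProds a (range k) :=
    ⟨p, hpq.of_append_left, fun i hi => hlt i (List.mem_append_left _ hi), rfl⟩
  have hq : (q.map a).prod ∈ distinctProds a (range k) :=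
    ⟨q, hpq.of_append_right, fun i hi => hlt i (List.mem_append_right _ hi), rfl⟩
  simpa [mul_assoc] using h k _ hp _ hq

theorem FPhat_mono_subsequence_general (G : Type*) [Group G]
    (C : Type*) (c : G → C) (a : ℕ → G) (hinj : Function.Injective a)
    (hal : ∃ col : C, {x ∈ FPhat a | c x ≠ col}.Finite) :
    ∃ φ : ℕ → ℕ, StrictMono φ ∧
      ∃ col : C, ∀ x ∈ FPhat (a ∘ φ), c x = col := by
  obtain ⟨col, hB⟩ := hal
  obtain ⟨φ, hφ, hgood⟩ := exists_strictMono_forall_image_range fun F => by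
    simpa only [Nat.cofinite_eq_atTop] using eventually_cofinite_mul_mul_notMem hinj
      (distinctProds_finite a F) (distinctProds_finite a F) hB
  have hsub : ∀ k, distinctProds (a ∘ φ) (range k) ⊆ distinctProds a ((range k).image φ) :=
    fun k => distinctProds_comp_subset a hφ.injective (range k)
  refine ⟨φ, hφ, col, fun x hx => ?_⟩
  by_contra hcol
  exact notMem_of_forall_mul_mul_notMem (fun k p hp q hq => hgood k p (hsub k hp) q (hsub k hq))
    x hx ⟨FPhat_comp_subset a hφ.injective hx, hcol⟩

/-- If `G` is an infinite finitely colored group and `a₁, a₂, …` are distinct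
elements with `FP̂(a₁, a₂, …)` almost-monochromatic, then some subsequence
`a_{i₁}, a_{i₂}, …` has `FP̂(a_{i₁}, a_{i₂}, …)` monochromatic. -/
theorem FPhat_mono_subsequence (G : Type*) [Group G] [Infinite G]
    (C : Type*) [Finite C] (c : G → C) (a : ℕ → G) (hinj : Function.Injective a)
    (hal : ∃ col : C, {x ∈ FPhat a | c x ≠ col}.Finite) :
    ∃ φ : ℕ → ℕ, StrictMono φ ∧
      ∃ col : C, ∀ x ∈ FPhat (a ∘ φ), c x = col :=
  FPhat_mono_subsequence_general G C c a hinj hal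
end

section
/- Let S be a semigroup generated by a set A such that (a) abc = def for all a,b,c,d,e,f ∈ A, and (b) there exist natural numbers h > 1 and d ≥ 1 with a^h = a^{h+d} for all a ∈ A. Then S³ = ⟨a⟩³ for each a ∈ A, where S³ denotes the set of products of three elements of S. -/
/-- Shevrin's Lemma, part (1). Let `S` be a semigroup generated by `A`, with
`abc = def` for all `a,b,c,d,e,f ∈ A`, and `a^(h+1) = a^(h+1+d)` for all `a ∈ A`,
for some `h ≥ 1` (so the exponent `h+1` is `> 1`) and `d ≥ 1`. Then
`S³ = ⟨a⟩³ = {a^k : k ≥ 3}` for each `a ∈ A`. -/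
theorem shevrin_lemma_cube (S : Type*) [Semigroup S] (A : Set S)
    (hgen : Subsemigroup.closure A = ⊤)
    (habc : ∀ a ∈ A, ∀ b ∈ A, ∀ c ∈ A, ∀ d ∈ A, ∀ e ∈ A, ∀ f ∈ A,
      a * b * c = d * e * f)
    (h d : ℕ) (hh : 1 ≤ h) (hd : 1 ≤ d)
    (hpow : ∀ a ∈ A, spow a h = spow a (h + d)) :
    ∀ a ∈ A, {s : S | ∃ x y z : S, s = x * y * z} =
      {s : S | ∃ k : ℕ, 2 ≤ k ∧ s = spow a k} := by
  intro a ha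
  have hall : ∀ x : S, x ∈ Subsemigroup.closure A := by
    intro x; rw [hgen]; trivial
  -- appending a generator to a power a^(n+1) with n ≥ 2
  have step : ∀ n, 2 ≤ n → ∀ b ∈ A, spow a n * b = spow a (n + 1) := by
    intro n hn b hb
    obtain ⟨p, rfl⟩ : ∃ p, n = p + 2 := ⟨n - 2, by omega⟩
    have key : a * (a * b) = a * (a * a) := by
      have := habc a ha a ha b hb a ha a ha a ha
      simpa [mul_assoc] using this
    show spow a (p + 2) * b = spow a (p + 3)
    simp only [spow, mul_assoc, key]
  -- lemma R: appending any closure element to a power a^(n+1), n ≥ 2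
  have R : ∀ x ∈ Subsemigroup.closure A, ∀ n, 2 ≤ n →
      ∃ m, 2 ≤ m ∧ spow a n * x = spow a m := by
    intro x hx
    induction hx using Subsemigroup.closure_induction with
    | mem b hb => intro n hn; exact ⟨n + 1, by omega, step n hn b hb⟩
    | mul u v hu hv ihu ihv =>
        intro n hn
        obtain ⟨m, hm, hmu⟩ := ihu n hn
        obtain ⟨m', hm', hmv⟩ := ihv m hm
        exact ⟨m', hm', by rw [← mul_assoc, hmu, hmv]⟩
  -- Head: b * c * x is a power for generators b, c and closure element x
  have Head : ∀ x ∈ Subsemigroup.closure A, ∀ b ∈ A, ∀ c ∈ A,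
      ∃ m, 2 ≤ m ∧ b * c * x = spow a m := by
    intro x hx
    induction hx using Subsemigroup.closure_induction with
    | mem e he =>
        intro b hb c hc
        refine ⟨2, le_refl 2, ?_⟩
        show b * c * e = spow a 1 * a
        show b * c * e = (a * a) * a
        exact habc b hb c hc e he a ha a ha a ha
    | mul u v hu hv ihu ihv =>
        intro b hb c hc
        obtain ⟨m, hm, hmu⟩ := ihu b hb c hc
        obtain ⟨m', hm', hmv⟩ := R v hv m hm
        exact ⟨m', hm', by rw [← mul_assoc, hmu, hmv]⟩
  -- First: peel the first generator off a closure element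
  have First : ∀ x ∈ Subsemigroup.closure A,
      ∃ b, b ∈ A ∧ (x = b ∨ ∃ r, r ∈ Subsemigroup.closure A ∧ x = b * r) := by
    intro x hx
    induction hx using Subsemigroup.closure_induction with
    | mem b hb => exact ⟨b, hb, Or.inl rfl⟩
    | mul u v hu hv ihu _ =>
        obtain ⟨b, hb, hcase⟩ := ihu
        rcases hcase with hcase | ⟨r, hr, hcase⟩
        · exact ⟨b, hb, Or.inr ⟨v, hv, by rw [hcase]⟩⟩
        · exact ⟨b, hb, Or.inr ⟨r * v, mul_mem hr hv, by rw [hcase, mul_assoc]⟩⟩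
  ext s
  simp only [Set.mem_setOf_eq]
  constructor
  · rintro ⟨x, y, z, rfl⟩
    obtain ⟨b, hb, hx | ⟨r, hr, hx⟩⟩ := First x (hall x)
    · obtain ⟨c, hc, hy | ⟨t, ht, hy⟩⟩ := First y (hall y)
      · obtain ⟨m, hm, hme⟩ := Head z (hall z) b hb c hc
        exact ⟨m, hm, by rw [hx, hy, ← hme]⟩
      · obtain ⟨m, hm, hme⟩ := Head (t * z) (mul_mem ht (hall z)) b hb c hc
        exact ⟨m, hm, by rw [hx, hy, ← hme]; simp [mul_assoc]⟩
    · obtain ⟨e, he, hrr | ⟨u, hu, hrr⟩⟩ := First r hr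
      · obtain ⟨m, hm, hme⟩ := Head (y * z) (mul_mem (hall y) (hall z)) b hb e he
        exact ⟨m, hm, by rw [hx, hrr, ← hme]; simp [mul_assoc]⟩
      · obtain ⟨m, hm, hme⟩ := Head (u * (y * z))
          (mul_mem hu (mul_mem (hall y) (hall z))) b hb e he
        exact ⟨m, hm, by rw [hx, hrr, ← hme]; simp [mul_assoc]⟩
  · rintro ⟨k, hk, rfl⟩
    obtain ⟨p, rfl⟩ : ∃ p, k = p + 2 := ⟨k - 2, by omega⟩
    exact ⟨spow a p, a, a, rfl⟩
end
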